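/- For every x ≥ 2 one has the representation λ(x)/(x(x−1)) = Λ({0})/2 + ∫_0^1 y (1−y)^{x−2} T(y) dy; consequently the function x ↦ λ(x)/(x(x−1)) is decreasing on [2,∞). -/

import Mathlib

open MeasureTheory Real Set Filter Topology

/-- The integrand of `lam`, with its continuous extension `x(x-1)/2` at `p = 0`. -/
noncomputable def lamInt (x p : ℝ) : ℝ :=
  if p = 0 then x * (x - 1) / 2
  else (1 - (1 - p) ^ x - x * p * (1 - p) ^ (x - 1)) / p ^ 2

/-- The total jump rate function `λ(x)` of the `Λ`-coalescent. -/
noncomputable def lam (Λ : Measure ℝ) (x : ℝ) : ℝ :=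
  ∫ p in Set.Icc (0:ℝ) 1, lamInt x p ∂Λ

/-- `T(y) = ∫_{(y,1]} p⁻² Λ(dp)`. -/
noncomputable def T (Λ : Measure ℝ) (y : ℝ) : ℝ :=
  ∫ p in Set.Ioc y 1, 1 / p ^ 2 ∂Λ

/-!
Write `k_x(y) = y (1 - y)^(x-2)`. The numerator of the integrand of `λ(x)` has `p`-derivative
`x (x - 1) k_x(p)`, so `λ(x) / (x (x - 1))` is the atom `Λ{0}/2` plus
`∫_{(0,1]} p⁻² ∫₀ᵖ k_x(y) dy Λ(dp)`. Exchanging the two integrals turns the latter into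
`∫₀¹ k_x(y) T(y) dy`; Fubini applies because `|k_x(y)| ≤ y`, so the integrand on `{y < p}` is at
most `y / p²`, whose integral in `y` is `1/2`. Finally `k_x(y)` decreases in `x` and `T ≥ 0`.
-/

open intervalIntegral

lemma continuous_one_sub_rpow {e : ℝ} (he : 0 ≤ e) : Continuous fun t : ℝ => (1 - t) ^ e :=
  (continuous_rpow_const he).comp (continuous_const.sub continuous_id)

lemma mul_one_sub_rpow_nonneg {y : ℝ} (hy : y ∈ Icc (0:ℝ) 1) (e : ℝ) : 0 ≤ y * (1 - y) ^ e :=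
  mul_nonneg hy.1 (rpow_nonneg (by linarith [hy.2]) e)

lemma mul_one_sub_rpow_le_of_le {y a b : ℝ} (hy : y ∈ Icc (0:ℝ) 1) (ha : 0 ≤ a) (hab : a ≤ b) :
    y * (1 - y) ^ b ≤ y * (1 - y) ^ a :=
  mul_le_mul_of_nonneg_left
    (rpow_le_rpow_of_exponent_ge' (by linarith [hy.2]) (by linarith [hy.1]) ha hab) hy.1

lemma mul_one_sub_rpow_le {y e : ℝ} (hy : y ∈ Icc (0:ℝ) 1) (he : 0 ≤ e) : y * (1 - y) ^ e ≤ y := by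
  simpa using mul_one_sub_rpow_le_of_le hy le_rfl he

lemma continuous_mul_one_sub_rpow {e : ℝ} (he : 0 ≤ e) : Continuous fun y : ℝ => y * (1 - y) ^ e :=
  continuous_id.mul (continuous_one_sub_rpow he)

lemma abs_mul_one_sub_rpow_le {y e : ℝ} (hy : y ∈ Icc (0:ℝ) 1) (he : 0 ≤ e) :
    |y * (1 - y) ^ e| ≤ y := by
  rw [abs_of_nonneg (mul_one_sub_rpow_nonneg hy e)]
  exact mul_one_sub_rpow_le hy he

lemma integral_le_sq_div_two {f : ℝ → ℝ} (hf : Continuous f) (hfy : ∀ y ∈ Icc (0:ℝ) 1, f y ≤ y)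
    {p : ℝ} (hp : p ∈ Icc (0:ℝ) 1) : ∫ y in (0:ℝ)..p, f y ≤ p ^ 2 / 2 :=
  calc ∫ y in (0:ℝ)..p, f y
      ≤ ∫ y in (0:ℝ)..p, y :=
        integral_mono_on hp.1 (hf.intervalIntegrable _ _) (continuous_id.intervalIntegrable _ _)
          fun y hy => hfy y ⟨hy.1, hy.2.trans hp.2⟩
    _ = p ^ 2 / 2 := by simp [integral_id]

lemma hasDerivAt_lamInt_numerator {x : ℝ} (hx : 2 ≤ x) (y : ℝ) :
    HasDerivAt (fun t : ℝ => 1 - (1 - t) ^ x - x * t * (1 - t) ^ (x - 1))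
      (x * (x - 1) * (y * (1 - y) ^ (x - 2))) y := by
  have hsub : HasDerivAt (fun t : ℝ => 1 - t) (-1) y := by
    simpa using (hasDerivAt_id y).const_sub 1
  have hpow := hsub.rpow_const (p := x) (Or.inr (by linarith))
  have hpow' := hsub.rpow_const (p := x - 1) (Or.inr (by linarith))
  have hlin : HasDerivAt (fun t : ℝ => x * t) x y := by
    simpa using (hasDerivAt_id y).const_mul x
  refine ((hpow.const_sub 1).sub (hlin.mul hpow')).congr_deriv ?_
  rw [show x - 1 - 1 = x - 2 by ring]
  ring

lemma integral_mul_one_sub_rpow {x : ℝ} (hx : 2 ≤ x) (p : ℝ) :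
    ∫ y in (0:ℝ)..p, y * (1 - y) ^ (x - 2) =
      (1 - (1 - p) ^ x - x * p * (1 - p) ^ (x - 1)) / (x * (x - 1)) := by
  have hxx : x * (x - 1) ≠ 0 := by nlinarith
  have hint : IntervalIntegrable (fun y : ℝ => x * (x - 1) * (y * (1 - y) ^ (x - 2))) volume 0 p :=
    (continuous_const.mul (continuous_mul_one_sub_rpow (by linarith))).intervalIntegrable _ _
  rw [eq_div_iff hxx, mul_comm, ← intervalIntegral.integral_const_mul,
    integral_eq_sub_of_hasDerivAt (fun t _ => hasDerivAt_lamInt_numerator hx t) hint]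
  norm_num

lemma lamInt_eq_mul_integral {x : ℝ} (hx : 2 ≤ x) {p : ℝ} (hp : p ≠ 0) :
    lamInt x p = x * (x - 1) * ((∫ y in (0:ℝ)..p, y * (1 - y) ^ (x - 2)) / p ^ 2) := by
  have hxx : x * (x - 1) ≠ 0 := by nlinarith
  rw [lamInt, if_neg hp, integral_mul_one_sub_rpow hx, mul_div_assoc', mul_div_cancel₀ _ hxx]

lemma lamInt_mem_Icc {x : ℝ} (hx : 2 ≤ x) {p : ℝ} (hp : p ∈ Icc (0:ℝ) 1) :
    lamInt x p ∈ Icc 0 (x * (x - 1) / 2) := by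
  rcases eq_or_ne p 0 with rfl | hp0
  · simp only [lamInt, if_pos]
    exact ⟨by nlinarith, le_rfl⟩
  rw [lamInt_eq_mul_integral hx hp0]
  have hxx : 0 ≤ x * (x - 1) := by nlinarith
  have hsq : 0 < p ^ 2 := by positivity
  have hnonneg : 0 ≤ ∫ y in (0:ℝ)..p, y * (1 - y) ^ (x - 2) :=
    integral_nonneg hp.1 fun y hy => mul_one_sub_rpow_nonneg ⟨hy.1, hy.2.trans hp.2⟩ _
  have hle := integral_le_sq_div_two (continuous_mul_one_sub_rpow (e := x - 2) (by linarith))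
    (fun y hy => mul_one_sub_rpow_le hy (by linarith)) hp
  refine ⟨by positivity, ?_⟩
  calc x * (x - 1) * ((∫ y in (0:ℝ)..p, y * (1 - y) ^ (x - 2)) / p ^ 2)
      ≤ x * (x - 1) * (p ^ 2 / 2 / p ^ 2) := by gcongr
    _ = x * (x - 1) / 2 := by field_simp

lemma measurable_lamInt {x : ℝ} (hx : 2 ≤ x) : Measurable (lamInt x) :=
  Measurable.ite measurableSet_eq measurable_const <|
    ((measurable_const.sub (continuous_one_sub_rpow (by linarith)).measurable).sub
      ((measurable_const.mul measurable_id).mul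
        (continuous_one_sub_rpow (by linarith)).measurable)).div (measurable_id.pow_const 2)

lemma integrableOn_lamInt (Λ : Measure ℝ) [IsFiniteMeasure Λ] {x : ℝ} (hx : 2 ≤ x) :
    IntegrableOn (lamInt x) (Icc 0 1) Λ := by
  refine Measure.integrableOn_of_bounded (M := x * (x - 1) / 2) (measure_ne_top Λ _)
    (measurable_lamInt hx).aestronglyMeasurable ?_
  filter_upwards [ae_restrict_mem measurableSet_Icc] with p hp
  have h := lamInt_mem_Icc hx hp
  rw [norm_of_nonneg h.1]
  exact h.2

lemma lam_eq_atom_add (Λ : Measure ℝ) [IsFiniteMeasure Λ] {x : ℝ} (hx : 2 ≤ x) :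
    lam Λ x = (Λ {0}).toReal * (x * (x - 1) / 2) + ∫ p in Ioc (0:ℝ) 1, lamInt x p ∂Λ := by
  have hint := integrableOn_lamInt Λ hx
  have hsplit : Icc (0:ℝ) 1 = {0} ∪ Ioc 0 1 := by
    rw [singleton_union, Ioc_insert_left zero_le_one]
  rw [lam, hsplit, setIntegral_union (disjoint_singleton_left.mpr (by simp)) measurableSet_Ioc
      (hint.mono_set (hsplit ▸ subset_union_left)) (hint.mono_set (hsplit ▸ subset_union_right)),
    integral_singleton, lamInt, if_pos rfl, smul_eq_mul, measureReal_def]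

noncomputable def belowDiagDivSq (f : ℝ → ℝ) : ℝ × ℝ → ℝ :=
  {z : ℝ × ℝ | z.2 < z.1}.indicator fun z => f z.2 / z.1 ^ 2

lemma measurable_belowDiagDivSq {f : ℝ → ℝ} (hf : Measurable f) :
    Measurable (belowDiagDivSq f) :=
  ((hf.comp measurable_snd).div (measurable_fst.pow_const 2)).indicator
    (measurableSet_lt measurable_snd measurable_fst)

lemma norm_belowDiagDivSq (f : ℝ → ℝ) (z : ℝ × ℝ) :
    ‖belowDiagDivSq f z‖ = belowDiagDivSq (fun y => |f y|) z := by
  simp only [belowDiagDivSq, indicator_apply]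
  split_ifs <;> simp

lemma integral_belowDiagDivSq_right (f : ℝ → ℝ) {p : ℝ} (hp : p ∈ Icc (0:ℝ) 1) :
    ∫ y in Ioc (0:ℝ) 1, belowDiagDivSq f (p, y) = (∫ y in (0:ℝ)..p, f y) / p ^ 2 := by
  change ∫ y in Ioc (0:ℝ) 1, (Iio p).indicator (fun y => f y / p ^ 2) y = _
  have hset : Ioc (0:ℝ) 1 ∩ Iio p = Ioo 0 p :=
    ext fun _ => ⟨fun h => ⟨h.1.1, h.2⟩, fun h => ⟨⟨h.1, h.2.le.trans hp.2⟩, h.2⟩⟩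
  rw [setIntegral_indicator measurableSet_Iio, hset, ← integral_Ioc_eq_integral_Ioo,
    ← integral_of_le hp.1, intervalIntegral.integral_div]

lemma integral_belowDiagDivSq_left (Λ : Measure ℝ) (f : ℝ → ℝ) {y : ℝ} (hy : 0 < y) :
    ∫ p in Ioc (0:ℝ) 1, belowDiagDivSq f (p, y) ∂Λ = f y * T Λ y := by
  have hind : ∀ p, belowDiagDivSq f (p, y) = (Ioi y).indicator (fun p => f y * (1 / p ^ 2)) p :=
    fun p => by simp only [belowDiagDivSq, indicator_apply, mem_Ioi, mul_one_div]; rfl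
  simp_rw [hind]
  rw [setIntegral_indicator measurableSet_Ioi, Ioc_inter_Ioi, max_eq_right hy.le,
    MeasureTheory.integral_const_mul, T]

lemma integrable_belowDiagDivSq (Λ : Measure ℝ) [IsFiniteMeasure Λ] {f : ℝ → ℝ}
    (hf : Continuous f) (hfy : ∀ y ∈ Icc (0:ℝ) 1, |f y| ≤ y) :
    Integrable (belowDiagDivSq f) ((Λ.restrict (Ioc 0 1)).prod (volume.restrict (Ioc 0 1))) := by
  have hmeas : AEStronglyMeasurable (belowDiagDivSq f)
      ((Λ.restrict (Ioc 0 1)).prod (volume.restrict (Ioc 0 1))) :=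
    (measurable_belowDiagDivSq hf.measurable).aestronglyMeasurable
  refine (integrable_prod_iff hmeas).2 ⟨Eventually.of_forall fun p => ?_, ?_⟩
  · exact ((hf.div_const (p ^ 2)).integrableOn_Ioc (μ := volume)).indicator measurableSet_Iio
  refine Integrable.mono' (integrable_const (1 / 2 : ℝ)) hmeas.norm.integral_prod_right' ?_
  filter_upwards [ae_restrict_mem measurableSet_Ioc] with p hp
  simp_rw [norm_belowDiagDivSq]
  rw [integral_belowDiagDivSq_right _ (Ioc_subset_Icc_self hp)]
  have hnonneg : 0 ≤ ∫ y in (0:ℝ)..p, |f y| := integral_nonneg hp.1.le fun _ _ => abs_nonneg _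
  have hle := integral_le_sq_div_two hf.abs hfy (Ioc_subset_Icc_self hp)
  have hsq : 0 < p ^ 2 := pow_pos hp.1 2
  rw [norm_of_nonneg (by positivity), div_le_iff₀ hsq]
  linarith

lemma setIntegral_integral_div_sq_eq (Λ : Measure ℝ) [IsFiniteMeasure Λ] {f : ℝ → ℝ}
    (hf : Continuous f) (hfy : ∀ y ∈ Icc (0:ℝ) 1, |f y| ≤ y) :
    ∫ p in Ioc (0:ℝ) 1, (∫ y in (0:ℝ)..p, f y) / p ^ 2 ∂Λ = ∫ y in Ioc (0:ℝ) 1, f y * T Λ y :=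
  calc ∫ p in Ioc (0:ℝ) 1, (∫ y in (0:ℝ)..p, f y) / p ^ 2 ∂Λ
      = ∫ p in Ioc (0:ℝ) 1, (∫ y in Ioc (0:ℝ) 1, belowDiagDivSq f (p, y)) ∂Λ :=
        setIntegral_congr_fun measurableSet_Ioc fun _ hp =>
          (integral_belowDiagDivSq_right f (Ioc_subset_Icc_self hp)).symm
    _ = ∫ y in Ioc (0:ℝ) 1, ∫ p in Ioc (0:ℝ) 1, belowDiagDivSq f (p, y) ∂Λ :=
        integral_integral_swap (integrable_belowDiagDivSq Λ hf hfy)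
    _ = ∫ y in Ioc (0:ℝ) 1, f y * T Λ y :=
        setIntegral_congr_fun measurableSet_Ioc fun _ hy => integral_belowDiagDivSq_left Λ f hy.1

lemma integrableOn_mul_T (Λ : Measure ℝ) [IsFiniteMeasure Λ] {f : ℝ → ℝ}
    (hf : Continuous f) (hfy : ∀ y ∈ Icc (0:ℝ) 1, |f y| ≤ y) :
    IntegrableOn (fun y => f y * T Λ y) (Ioc 0 1) :=
  (integrable_belowDiagDivSq Λ hf hfy).integral_prod_right.congr <| by
    filter_upwards [ae_restrict_mem measurableSet_Ioc] with y hy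
    exact integral_belowDiagDivSq_left Λ f hy.1

lemma T_nonneg (Λ : Measure ℝ) (y : ℝ) : 0 ≤ T Λ y :=
  integral_nonneg fun p => by positivity

lemma lam_div_mul_sub_one_eq (Λ : Measure ℝ) [IsFiniteMeasure Λ] {x : ℝ} (hx : 2 ≤ x) :
    lam Λ x / (x * (x - 1)) =
      (Λ {0}).toReal / 2 + ∫ y in (0:ℝ)..1, y * (1 - y) ^ (x - 2) * T Λ y := by
  have hx0 : x ≠ 0 := by linarith
  have hx1 : x - 1 ≠ 0 := by linarith
  have hlam : ∫ p in Ioc (0:ℝ) 1, lamInt x p ∂Λ =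
      x * (x - 1) * ∫ p in Ioc (0:ℝ) 1, (∫ y in (0:ℝ)..p, y * (1 - y) ^ (x - 2)) / p ^ 2 ∂Λ := by
    rw [← MeasureTheory.integral_const_mul]
    exact setIntegral_congr_fun measurableSet_Ioc fun p hp => lamInt_eq_mul_integral hx hp.1.ne'
  have hfubini := setIntegral_integral_div_sq_eq Λ (continuous_mul_one_sub_rpow (e := x - 2)
    (by linarith)) fun y hy => abs_mul_one_sub_rpow_le hy (by linarith)
  rw [lam_eq_atom_add Λ hx, hlam, hfubini, integral_of_le zero_le_one]
  field_simp

theorem lam_div_repr_and_antitone_general (Λ : Measure ℝ) [IsFiniteMeasure Λ] :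
    (∀ x : ℝ, 2 ≤ x →
      lam Λ x / (x * (x - 1)) =
        (Λ {0}).toReal / 2 + ∫ y in (0:ℝ)..1, y * (1 - y) ^ (x - 2) * T Λ y) ∧
    AntitoneOn (fun x => lam Λ x / (x * (x - 1))) (Set.Ici 2) := by
  refine ⟨fun x hx => lam_div_mul_sub_one_eq Λ hx, fun a ha b hb hab => ?_⟩
  simp only [lam_div_mul_sub_one_eq Λ ha, lam_div_mul_sub_one_eq Λ hb,
    integral_of_le zero_le_one (μ := volume)]
  have hint : ∀ x ∈ Ici (2:ℝ), IntegrableOn (fun y => y * (1 - y) ^ (x - 2) * T Λ y) (Ioc 0 1) :=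
    fun x hx => integrableOn_mul_T Λ (continuous_mul_one_sub_rpow (by linarith [mem_Ici.1 hx]))
      fun y hy => abs_mul_one_sub_rpow_le hy (by linarith [mem_Ici.1 hx])
  gcongr _ + ?_
  refine setIntegral_mono_on (hint b hb) (hint a ha) measurableSet_Ioc fun y hy => ?_
  exact mul_le_mul_of_nonneg_right (mul_one_sub_rpow_le_of_le (Ioc_subset_Icc_self hy)
    (by linarith [mem_Ici.1 ha]) (by linarith)) (T_nonneg Λ y)

/-- Representation of `λ(x)/(x(x-1))` and its monotonicity: for every `x ≥ 2`,
`λ(x)/(x(x−1)) = Λ({0})/2 + ∫_0^1 y (1−y)^{x−2} T(y) dy`, and consequently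
`x ↦ λ(x)/(x(x−1))` is decreasing on `[2, ∞)`. -/
theorem lam_div_repr_and_antitone (Λ : Measure ℝ) [IsFiniteMeasure Λ] (hΛ : Λ ≠ 0)
    (hsupp : Λ (Set.Icc (0:ℝ) 1)ᶜ = 0) :
    (∀ x : ℝ, 2 ≤ x →
      lam Λ x / (x * (x - 1)) =
        (Λ {0}).toReal / 2 + ∫ y in (0:ℝ)..1, y * (1 - y) ^ (x - 2) * T Λ y) ∧
    AntitoneOn (fun x => lam Λ x / (x * (x - 1))) (Set.Ici 2) :=
  lam_div_repr_and_antitone_general Λ
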